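/- arXiv:1009.6066 — 2 statements merged into one kernel-verified Lean document; each statement's English description precedes it below -/
import Mathlib

section
/- Let n > 2 be a natural number, k : Fin n → ℝ, r ∈ ℝ, and set τ = Σⱼ k(j). Assume that k(j)² − τ·k(j) = r for every j, and that k takes exactly two distinct values a and b with a > b. Let n₁ be the number of indices j with k(j) = a and n₂ the number of indices with k(j) = b. Then: τ² + 4r > 0; a = (τ + √(τ² + 4r))/2 and b = (τ − √(τ² + 4r))/2; n₁ + n₂ = n; (n₂ − n₁)·√(τ² + 4r) = (n − 2)·τ; and consequently τ²·((n − 2)² − (n₂ − n₁)²) = 4·r·(n₂ − n₁)². -/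
/-!
Two distinct roots `a > b` of `X² - τX - r` satisfy `a + b = τ` and `ab = -r`, so the discriminant
`τ² + 4r` is `(a - b)²` and its square root is `a - b`. Splitting `τ = Σ k j` by value gives
`τ = n₁a + n₂b`; eliminating `a + b = τ` and `n₁ + n₂ = n` turns this into
`(n₂ - n₁)(a - b) = (n - 2)τ`, and squaring gives the last identity.
-/

open Finset

section Quadratic

variable {R : Type*} [CommRing R] [IsDomain R] {τ r a b : R}

theorem add_eq_of_sq_sub_mul_eq (hab : a ≠ b) (ha : a ^ 2 - τ * a = r) (hb : b ^ 2 - τ * b = r) :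
    a + b = τ := by
  have h : (a - b) * (a + b - τ) = 0 := by linear_combination ha - hb
  rcases mul_eq_zero.1 h with h | h
  · exact absurd (sub_eq_zero.1 h) hab
  · exact sub_eq_zero.1 h

theorem sq_add_four_mul_eq_sq_sub (hab : a ≠ b) (ha : a ^ 2 - τ * a = r)
    (hb : b ^ 2 - τ * b = r) : τ ^ 2 + 4 * r = (a - b) ^ 2 := by
  have hsum := add_eq_of_sq_sub_mul_eq hab ha hb
  linear_combination (-(τ + a + b) + 4 * a) * hsum - 4 * ha

end Quadratic

section TwoValued

variable {ι α : Type*} [Fintype ι] [DecidableEq α] {k : ι → α} {a b : α}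

theorem filter_eq_right_eq_filter_ne_left (hab : a ≠ b) (hk : ∀ j, k j = a ∨ k j = b) :
    univ.filter (fun j => k j = b) = univ.filter (fun j => ¬ k j = a) := by
  refine filter_congr fun j _ => ?_
  rcases hk j with h | h <;> simp [h, hab, hab.symm]

theorem card_filter_eq_add_card_filter_eq (hab : a ≠ b) (hk : ∀ j, k j = a ∨ k j = b) :
    #(univ.filter fun j => k j = a) + #(univ.filter fun j => k j = b) = Fintype.card ι := by
  rw [filter_eq_right_eq_filter_ne_left hab hk, card_filter_add_card_filter_not, card_univ]

theorem sum_eq_card_smul_add_card_smul [AddCommMonoid α] (hab : a ≠ b)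
    (hk : ∀ j, k j = a ∨ k j = b) :
    ∑ j, k j = #(univ.filter fun j => k j = a) • a + #(univ.filter fun j => k j = b) • b := by
  rw [← sum_filter_add_sum_filter_not univ (fun j => k j = a) k,
    ← filter_eq_right_eq_filter_ne_left hab hk,
    sum_congr rfl fun j hj => (mem_filter.1 hj).2, sum_congr rfl fun j hj => (mem_filter.1 hj).2,
    sum_const, sum_const]

end TwoValued

theorem stmt_1_general (n : ℕ) (k : Fin n → ℝ) (r τ a b : ℝ)
    (hτ : τ = ∑ j, k j)
    (hroot : ∀ j, k j ^ 2 - τ * k j = r)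
    (hab : ∀ j, k j = a ∨ k j = b)
    (ha : ∃ j, k j = a) (hb : ∃ j, k j = b) (hgt : a > b)
    (n₁ n₂ : ℕ)
    (hn₁ : n₁ = (Finset.univ.filter fun j => k j = a).card)
    (hn₂ : n₂ = (Finset.univ.filter fun j => k j = b).card) :
    0 < τ ^ 2 + 4 * r ∧
    a = (τ + Real.sqrt (τ ^ 2 + 4 * r)) / 2 ∧
    b = (τ - Real.sqrt (τ ^ 2 + 4 * r)) / 2 ∧
    n₁ + n₂ = n ∧
    ((n₂ : ℝ) - (n₁ : ℝ)) * Real.sqrt (τ ^ 2 + 4 * r) = ((n : ℝ) - 2) * τ ∧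
    τ ^ 2 * (((n : ℝ) - 2) ^ 2 - ((n₂ : ℝ) - (n₁ : ℝ)) ^ 2)
      = 4 * r * ((n₂ : ℝ) - (n₁ : ℝ)) ^ 2 := by
  obtain ⟨ja, rfl⟩ := ha
  obtain ⟨jb, rfl⟩ := hb
  have hne : k ja ≠ k jb := hgt.ne'
  have hsum := add_eq_of_sq_sub_mul_eq hne (hroot ja) (hroot jb)
  have hdisc := sq_add_four_mul_eq_sq_sub hne (hroot ja) (hroot jb)
  have hpos : 0 < τ ^ 2 + 4 * r := hdisc ▸ pow_pos (sub_pos.2 hgt) 2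
  have hsqrt : √(τ ^ 2 + 4 * r) = k ja - k jb := by rw [hdisc, Real.sqrt_sq (sub_pos.2 hgt).le]
  have hcard : n₁ + n₂ = n := by
    rw [hn₁, hn₂, card_filter_eq_add_card_filter_eq hne hab, Fintype.card_fin]
  have hτsum : τ = n₁ * k ja + n₂ * k jb := by
    rw [hτ, sum_eq_card_smul_add_card_smul hne hab, hn₁, hn₂, nsmul_eq_mul, nsmul_eq_mul]
  have key : ((n₂ : ℝ) - n₁) * √(τ ^ 2 + 4 * r) = ((n : ℝ) - 2) * τ := by
    rw [hsqrt, ← hcard]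
    push_cast
    linear_combination (n₁ + n₂ : ℝ) * hsum + 2 * hτsum
  refine ⟨hpos, by linarith, by linarith, hcard, key, ?_⟩
  have hsq := congrArg (· ^ 2) key
  simp only [mul_pow, Real.sq_sqrt hpos.le] at hsq
  linear_combination -hsq

/-- Let `n > 2`, `k : Fin n → ℝ`, `r ∈ ℝ`, and `τ = Σⱼ k j`.
Assume `k j ^ 2 − τ * k j = r` for every `j`, and that `k` takes exactly two distinct
values `a` and `b` with `a > b`, attained `n₁` and `n₂` times respectively. Then
`τ² + 4r > 0`, `a` and `b` are the two roots of `k² − τk − r`, `n₁ + n₂ = n`,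
`(n₂ − n₁)·√(τ² + 4r) = (n − 2)·τ`, and
`τ²·((n − 2)² − (n₂ − n₁)²) = 4r·(n₂ − n₁)²`. -/
theorem stmt_1 (n : ℕ) (hn : 2 < n) (k : Fin n → ℝ) (r τ a b : ℝ)
    (hτ : τ = ∑ j, k j)
    (hroot : ∀ j, k j ^ 2 - τ * k j = r)
    (hab : ∀ j, k j = a ∨ k j = b)
    (ha : ∃ j, k j = a) (hb : ∃ j, k j = b) (hgt : a > b)
    (n₁ n₂ : ℕ)
    (hn₁ : n₁ = (Finset.univ.filter fun j => k j = a).card)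
    (hn₂ : n₂ = (Finset.univ.filter fun j => k j = b).card) :
    0 < τ ^ 2 + 4 * r ∧
    a = (τ + Real.sqrt (τ ^ 2 + 4 * r)) / 2 ∧
    b = (τ - Real.sqrt (τ ^ 2 + 4 * r)) / 2 ∧
    n₁ + n₂ = n ∧
    ((n₂ : ℝ) - (n₁ : ℝ)) * Real.sqrt (τ ^ 2 + 4 * r) = ((n : ℝ) - 2) * τ ∧
    τ ^ 2 * (((n : ℝ) - 2) ^ 2 - ((n₂ : ℝ) - (n₁ : ℝ)) ^ 2)
      = 4 * r * ((n₂ : ℝ) - (n₁ : ℝ)) ^ 2 :=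
  stmt_1_general n k r τ a b hτ hroot hab ha hb hgt n₁ n₂ hn₁ hn₂
end

section
/- Let M be a smooth manifold without boundary modeled on a finite-dimensional real normed space, let λ : M → ℝ be a smooth function, and let N be a continuous vector field on M (a continuous section p ↦ N(p) ∈ T_pM of the tangent bundle). Define w : M → ℝ by w(p) = dλ_p(N(p)) (the directional derivative of λ along N), and assume w is continuous. Fix a positive integer n, ε ∈ ℝ, a function μ : M → ℝ, and ψ : ℝ → ℝ of class C² with ψ′(x) ≠ 0 for every x ∈ ℝ. Suppose that for every p ∈ M: (i) ψ(λ(p)) − ε = −(2/n)·μ(p)·λ(p), and (ii) μ(p)·w(p) = 0. Then w(p) = 0 for every p ∈ M, i.e. N(λ) ≡ 0. -/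
/-!
Wherever `w ≠ 0`, the relation `μ w = 0` forces `μ = 0`, hence `ψ ∘ λ = ε`; since `ψ` is
injective (its derivative has constant sign by Darboux), `λ` is constant on the open set
`{w ≠ 0}`. So `dλ` vanishes there, i.e. `w = 0` on `{w ≠ 0}`, which must therefore be empty.
-/

open scoped Manifold

theorem Function.injective_of_deriv_ne_zero {f : ℝ → ℝ} (hf : ∀ x, deriv f x ≠ 0) :
    Function.Injective f := by
  have hderiv : ∀ x ∈ Set.univ, HasDerivWithinAt f (deriv f x) Set.univ x := fun x _ =>
    (differentiableAt_of_deriv_ne_zero (hf x)).hasDerivAt.hasDerivWithinAt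
  rcases hasDerivWithinAt_forall_lt_or_forall_gt_of_forall_ne convex_univ hderiv
      (fun x _ => hf x) with hneg | hpos
  · exact (strictAnti_of_deriv_neg fun x => hneg x trivial).injective
  · exact (strictMono_of_deriv_pos fun x => hpos x trivial).injective

section

variable {𝕜 : Type*} [NontriviallyNormedField 𝕜] {E : Type*} [NormedAddCommGroup E]
  [NormedSpace 𝕜 E] {H : Type*} [TopologicalSpace H] {I : ModelWithCorners 𝕜 E H}
  {M : Type*} [TopologicalSpace M] [ChartedSpace H M]
  {F : Type*} [NormedAddCommGroup F] [NormedSpace 𝕜 F]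

theorem eq_zero_of_mfderiv_apply_of_const_on_ne_zero {f : M → F}
    {N : (p : M) → TangentSpace I p} {w : M → F} (hwc : Continuous w)
    (hw : ∀ p, w p = mfderiv I 𝓘(𝕜, F) f p (N p))
    (hconst : ∀ p q, w p ≠ 0 → w q ≠ 0 → f p = f q) (p : M) : w p = 0 := by
  by_contra hp
  have hlocal : f =ᶠ[nhds p] fun _ => f p :=
    Filter.eventually_of_mem ((isOpen_ne_fun hwc continuous_const).mem_nhds hp)
      fun q hq => hconst q p hq hp
  rw [hw p, hlocal.mfderiv_eq, mfderiv_const] at hp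
  exact hp rfl

end

theorem stmt_4_general {E : Type*} [NormedAddCommGroup E] [NormedSpace ℝ E]
    {M : Type*} [TopologicalSpace M] [ChartedSpace E M]
    (lam : M → ℝ)
    (N : (p : M) → TangentSpace (modelWithCornersSelf ℝ E) p)
    (w : M → ℝ)
    (hw : ∀ p : M,
      w p = mfderiv (modelWithCornersSelf ℝ E) (modelWithCornersSelf ℝ ℝ) lam p (N p))
    (hwc : Continuous w)
    (n : ℕ) (ε : ℝ) (μ : M → ℝ) (ψ : ℝ → ℝ)
    (hψ' : ∀ x : ℝ, deriv ψ x ≠ 0)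
    (h1 : ∀ p : M, ψ (lam p) - ε = -(2 / (n : ℝ)) * μ p * lam p)
    (h2 : ∀ p : M, μ p * w p = 0) :
    ∀ p : M, w p = 0 := by
  have hψ_level : ∀ p, w p ≠ 0 → ψ (lam p) = ε := fun p hp => by
    have hμ : μ p = 0 := (mul_eq_zero.1 (h2 p)).resolve_right hp
    simpa [hμ, sub_eq_zero] using h1 p
  refine eq_zero_of_mfderiv_apply_of_const_on_ne_zero hwc hw fun p q hp hq => ?_
  exact Function.injective_of_deriv_ne_zero hψ' ((hψ_level p hp).trans (hψ_level q hq).symm)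

/-- Let `M` be a smooth boundaryless manifold modeled on a
finite-dimensional real normed space `E`, `lam : M → ℝ` a smooth function, and `N` a
continuous vector field on `M`. Let `w p = d(lam)_p (N p)` be the directional derivative
of `lam` along `N`, and assume `w` is continuous. Fix a positive integer `n`, `ε ∈ ℝ`,
a function `μ : M → ℝ`, and `ψ : ℝ → ℝ` of class `C²` with nowhere-vanishing derivative.
If `ψ(lam p) − ε = −(2/n)·μ(p)·lam(p)` and `μ(p)·w(p) = 0` for all `p`, then `w ≡ 0`. -/
theorem stmt_4 {E : Type*} [NormedAddCommGroup E] [NormedSpace ℝ E] [FiniteDimensional ℝ E]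
    {M : Type*} [TopologicalSpace M] [ChartedSpace E M]
    [IsManifold (modelWithCornersSelf ℝ E) (⊤ : ℕ∞) M]
    (lam : M → ℝ)
    (hlam : ContMDiff (modelWithCornersSelf ℝ E) (modelWithCornersSelf ℝ ℝ) (⊤ : ℕ∞) lam)
    (N : (p : M) → TangentSpace (modelWithCornersSelf ℝ E) p)
    (hN : Continuous fun p : M => (⟨p, N p⟩ : TangentBundle (modelWithCornersSelf ℝ E) M))
    (w : M → ℝ)
    (hw : ∀ p : M,
      w p = mfderiv (modelWithCornersSelf ℝ E) (modelWithCornersSelf ℝ ℝ) lam p (N p))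
    (hwc : Continuous w)
    (n : ℕ) (hn : 1 ≤ n) (ε : ℝ) (μ : M → ℝ) (ψ : ℝ → ℝ)
    (hψ : ContDiff ℝ 2 ψ) (hψ' : ∀ x : ℝ, deriv ψ x ≠ 0)
    (h1 : ∀ p : M, ψ (lam p) - ε = -(2 / (n : ℝ)) * μ p * lam p)
    (h2 : ∀ p : M, μ p * w p = 0) :
    ∀ p : M, w p = 0 :=
  stmt_4_general lam N w hw hwc n ε μ ψ hψ' h1 h2
end
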